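/- arXiv:math/9707207 — 5 statements merged into one kernel-verified Lean document; each statement's English description precedes it below -/
import Mathlib

section
/- Let κ be a weakly compact cardinal. Suppose given: a subset B of κ of cardinality κ; a κ-sequence of ordinals ⟨γ_i : i < κ⟩ such that 0 < γ_i < κ for all i < κ; and a κ-sequence of functions ⟨F_i : i < κ⟩ with F_i : κ → γ_i. Then there is a subset B' of B of cardinality κ such that each F_i is constant on a tail of B': for every i < κ there exist η < κ and ξ < γ_i such that F_i(α) = ξ whenever α ∈ B' and α ≥ η. -/
open Cardinal

/-- The restriction of the tree order to the predecessors of `t`. -/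
def segRel {T : Type u} (lt : T → T → Prop) (t : T) :
    {y : T // lt y t} → {y : T // lt y t} → Prop :=
  fun a b => lt a.1 b.1

/-- A tree is a type with a transitive binary relation such that the
set of predecessors of any element is well-ordered by the relation. -/
structure IsTreeOrder {T : Type u} (lt : T → T → Prop) : Prop where
  trans : Transitive lt
  wo : ∀ t : T, IsWellOrder {y : T // lt y t} (segRel lt t)

/-- The rank of an element of a tree: the order type of its set of predecessors. -/
noncomputable def treeRank {T : Type u} {lt : T → T → Prop} (h : IsTreeOrder lt) (t : T) :
    Ordinal.{u} :=
  @Ordinal.type _ (segRel lt t) (h.wo t)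

/-- A `κ`-tree: every element has rank `< κ`, and each level below `κ` is
nonempty of cardinality `< κ`. -/
def IsKappaTree {T : Type 1} {lt : T → T → Prop} (h : IsTreeOrder lt) (κ : Cardinal.{0}) :
    Prop :=
  (∀ t, treeRank h t < Ordinal.lift.{1} κ.ord) ∧
  ∀ α < Ordinal.lift.{1} κ.ord,
    ({t | treeRank h t = α}.Nonempty ∧ #{t | treeRank h t = α} < Cardinal.lift.{1} κ)

/-- A branch of a `κ`-tree: a downward closed set meeting each level `T_α`
(`α < κ`) in exactly one element. -/
def IsTreeBranch {T : Type 1} {lt : T → T → Prop} (h : IsTreeOrder lt) (κ : Cardinal.{0})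
    (b : Set T) : Prop :=
  (∀ x ∈ b, ∀ y, lt y x → y ∈ b) ∧
  ∀ α < Ordinal.lift.{1} κ.ord, ∃! t, t ∈ b ∧ treeRank h t = α

/-- `κ` is strongly inaccessible: uncountable, regular, and a strong limit. -/
def IsStronglyInaccessible (κ : Cardinal.{0}) : Prop :=
  ℵ₀ < κ ∧ κ.IsRegular ∧ κ.IsStrongLimit

/-- `κ` is weakly compact iff it is strongly inaccessible and every `κ`-tree has a branch. -/
def IsWeaklyCompact (κ : Cardinal.{0}) : Prop :=
  IsStronglyInaccessible κ ∧
  ∀ (T : Type 1) (lt : T → T → Prop) (h : IsTreeOrder lt),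
    IsKappaTree h κ → ∃ b : Set T, IsTreeBranch h κ b

/-!
Consider the tree whose nodes of height `α < κ` are the initial segments `⟨F i β : i < α⟩` with
`β ∈ B`, `β ≥ α`, ordered by end-extension. Since `κ` is strongly inaccessible, a level has at most
`(sup_{i<α} γ i) ^ |α| < κ` nodes, so weak compactness yields a branch: a sequence `c` each of
whose initial segments `c ↾ η` is realized by some `β ≥ η` in `B`. Let `g η` be the least such `β`.
Then `g` is monotone with `η ≤ g η`, so by regularity `B' = g '' κ` has cardinality `κ`; and
`g η > g i` forces `η > i`, hence `F i = c i` on `B'` above `g i`.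
-/

open Cardinal Ordinal Set

universe u

theorem Set.indicator_Iio_indicator_Iio {α M : Type*} [LinearOrder α] [Zero M] {a b : α}
    (h : a ≤ b) (f : α → M) : (Iio a).indicator ((Iio b).indicator f) = (Iio a).indicator f := by
  rw [indicator_indicator, Iio_inter_Iio, min_eq_left h]

namespace Cardinal

theorem IsStrongLimit.power_lt {κ a b : Cardinal.{u}} (hκ : κ.IsStrongLimit) (ha : a < κ)
    (hb : b < κ) : a ^ b < κ :=
  calc a ^ b ≤ (2 ^ a) ^ b := power_le_power_right (cantor a).le
    _ = 2 ^ (a * b) := power_mul.symm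
    _ < κ := hκ.isStrongPrelimit (mul_lt_of_lt hκ.aleph0_le ha hb)

theorem IsRegular.mk_eq_lift_iff {κ : Cardinal.{u}} (hκ : κ.IsRegular) {S : Set Ordinal.{u}}
    (hS : S ⊆ Iio κ.ord) : #S = Cardinal.lift.{u + 1} κ ↔ ∀ α < κ.ord, ∃ β ∈ S, α ≤ β := by
  constructor
  · intro hcard α hα
    by_contra! hbdd
    have hle : #S ≤ #(Iio α) := mk_le_mk_of_subset hbdd
    rw [hcard, Cardinal.mk_Iio_ordinal, lift_le] at hle
    exact (lt_ord.1 hα).not_ge hle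
  · intro hunb
    refine le_antisymm ((mk_le_mk_of_subset hS).trans_eq ?_) ?_
    · rw [Cardinal.mk_Iio_ordinal, card_ord]
    by_contra! hlt
    have hsup : sSup S < κ.ord :=
      sSup_lt_of_lt_cof (by rwa [← lift_cof, hκ.cof_ord]) fun β hβ => hS hβ
    obtain ⟨β, hβS, hβ⟩ := hunb _ ((isSuccLimit_ord hκ.aleph0_le).succ_lt hsup)
    have hβsup : β ≤ sSup S := le_csSup ⟨κ.ord, fun _ h => (hS h).le⟩ hβS
    exact (Order.succ_le_iff.1 (hβ.trans hβsup)).false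

end Cardinal

def IsCofinallyRealized (κ : Cardinal.{u}) (B : Set Ordinal.{u})
    (F : Ordinal.{u} → Ordinal.{u} → Ordinal.{u}) (c : Ordinal.{u} → Ordinal.{u}) : Prop :=
  ∀ η < κ.ord, ∃ β ∈ B, η ≤ β ∧ ∀ i < η, F i β = c i

theorem IsCofinallyRealized.exists_eventually_eq {κ : Cardinal.{u}} (hκ : κ.IsRegular)
    {B : Set Ordinal.{u}} (hB : B ⊆ Iio κ.ord) {F : Ordinal.{u} → Ordinal.{u} → Ordinal.{u}}
    {c : Ordinal.{u} → Ordinal.{u}} (hc : IsCofinallyRealized κ B F c) :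
    ∃ B' ⊆ B, #B' = Cardinal.lift.{u + 1} κ ∧
      ∀ i < κ.ord, ∃ η < κ.ord, ∀ α ∈ B', η ≤ α → F i α = c i := by
  set A : Ordinal.{u} → Set Ordinal.{u} := fun η => {β | β ∈ B ∧ η ≤ β ∧ ∀ i < η, F i β = c i}
  have hA : Antitone A := fun η η' hle β ⟨hβB, hβ, hFc⟩ =>
    ⟨hβB, hle.trans hβ, fun i hi => hFc i (hi.trans_le hle)⟩
  set g : Ordinal.{u} → Ordinal.{u} := fun η => sInf (A η)
  have hgA : ∀ η < κ.ord, g η ∈ A η := fun η hη => csInf_mem (hc η hη)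
  have hg : ∀ η < κ.ord, ∀ η' ≤ η, g η' ≤ g η := fun η hη η' hle =>
    csInf_le_csInf (OrderBot.bddBelow _) (hc η hη) (hA hle)
  have hgB : g '' Iio κ.ord ⊆ B := by
    rintro _ ⟨η, hη, rfl⟩
    exact (hgA η hη).1
  refine ⟨g '' Iio κ.ord, hgB, ?_, fun i hi => ?_⟩
  · rw [hκ.mk_eq_lift_iff (hgB.trans hB)]
    exact fun α hα => ⟨g α, mem_image_of_mem g hα, (hgA α hα).2.1⟩
  · refine ⟨Order.succ (g i), (isSuccLimit_ord hκ.aleph0_le).succ_lt (hB (hgA i hi).1), ?_⟩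
    rintro _ ⟨η, hη, rfl⟩ hle
    have hiη : i < η := lt_of_not_ge fun h => (Order.succ_le_iff.1 hle).not_ge (hg i hi η h)
    exact (hgA η hη).2.2 i hiη

/-- A node of height `α` is the initial segment `⟨F i β : i < α⟩`, stored as a total function
vanishing from `α` on. -/
@[ext]
structure RealizedSegment (κ : Cardinal.{0}) (B : Set Ordinal.{0})
    (F : Ordinal.{0} → Ordinal.{0} → Ordinal.{0}) : Type 1 where
  height : Ordinal.{0}
  val : Ordinal.{0} → Ordinal.{0}
  height_lt : height < κ.ord
  realized : ∃ β ∈ B, height ≤ β ∧ val = (Iio height).indicator (F · β)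

namespace RealizedSegment

variable {κ : Cardinal.{0}} {B : Set Ordinal.{0}} {F : Ordinal.{0} → Ordinal.{0} → Ordinal.{0}}

theorem indicator_val (t : RealizedSegment κ B F) : (Iio t.height).indicator t.val = t.val := by
  obtain ⟨β, -, -, h⟩ := t.realized
  rw [h, indicator_indicator, inter_self]

def IsProperPrefix (s t : RealizedSegment κ B F) : Prop :=
  s.height < t.height ∧ s.val = (Iio s.height).indicator t.val

noncomputable def restrict (t : RealizedSegment κ B F) (α : Ordinal.{0}) (hα : α < t.height) :
    RealizedSegment κ B F where
  height := α
  val := (Iio α).indicator t.val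
  height_lt := hα.trans t.height_lt
  realized := by
    obtain ⟨β, hβB, hβ, h⟩ := t.realized
    exact ⟨β, hβB, hα.le.trans hβ, by rw [h, indicator_Iio_indicator_Iio hα.le]⟩

theorem restrict_isProperPrefix (t : RealizedSegment κ B F) (α : Ordinal.{0})
    (hα : α < t.height) : (t.restrict α hα).IsProperPrefix t :=
  ⟨hα, rfl⟩

noncomputable def segIso (t : RealizedSegment κ B F) :
    segRel IsProperPrefix t ≃r Subrel (· < ·) (· < t.height) where
  toFun s := ⟨s.1.height, s.2.1⟩
  invFun α := ⟨t.restrict α.1 α.2, t.restrict_isProperPrefix α.1 α.2⟩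
  left_inv s := Subtype.ext (RealizedSegment.ext rfl s.2.2.symm)
  right_inv _ := rfl
  map_rel_iff' {s s'} := by
    refine ⟨fun h => ⟨h, ?_⟩, fun h => h.1⟩
    have hlt : s.1.height < s'.1.height := h
    rw [s'.2.2, indicator_Iio_indicator_Iio hlt.le]
    exact s.2.2

theorem isTreeOrder : IsTreeOrder (IsProperPrefix (κ := κ) (B := B) (F := F)) where
  trans _ _ _ h₁ h₂ :=
    ⟨h₁.1.trans h₂.1, by rw [h₁.2, h₂.2, indicator_Iio_indicator_Iio h₁.1.le]⟩
  wo t := (segIso t).toRelEmbedding.isWellOrder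

theorem treeRank_eq (h : IsTreeOrder (IsProperPrefix (κ := κ) (B := B) (F := F)))
    (t : RealizedSegment κ B F) : treeRank h t = Ordinal.lift.{1} t.height :=
  (@RelIso.ordinalType_congr _ _ _ _ (h.wo t) _ (segIso t)).trans (typein_ordinal t.height)

theorem treeRank_eq_lift_iff (h : IsTreeOrder (IsProperPrefix (κ := κ) (B := B) (F := F)))
    (t : RealizedSegment κ B F) {α : Ordinal.{0}} :
    treeRank h t = Ordinal.lift.{1} α ↔ t.height = α := by
  rw [treeRank_eq, Ordinal.lift_inj]

theorem nonempty_height_eq (hB : ∀ α < κ.ord, ∃ β ∈ B, α ≤ β) {α : Ordinal.{0}}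
    (hα : α < κ.ord) : {t : RealizedSegment κ B F | t.height = α}.Nonempty := by
  obtain ⟨β, hβB, hβ⟩ := hB α hα
  exact ⟨⟨α, (Iio α).indicator (F · β), hα, β, hβB, hβ, rfl⟩, rfl⟩

theorem mk_height_eq_lt (hreg : κ.IsRegular) (hsl : κ.IsStrongLimit)
    {γ : Ordinal.{0} → Ordinal.{0}} (hγ : ∀ i < κ.ord, γ i < κ.ord)
    (hF : ∀ i < κ.ord, ∀ β ∈ B, F i β < γ i) {α : Ordinal.{0}} (hα : α < κ.ord) :
    #{t : RealizedSegment κ B F | t.height = α} < Cardinal.lift.{1} κ := by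
  set δ := ⨆ i : Iio α, γ i
  have hδ : δ < κ.ord := by
    refine lift_iSup_lt_of_lt_cof ?_ fun i => hγ i (i.2.trans hα)
    rw [Cardinal.mk_Iio_ordinal, ← lift_cof, hreg.cof_ord, Cardinal.lift_uzero, Cardinal.lift_lt]
    exact lt_ord.1 hα
  have hval : ∀ t : {t : RealizedSegment κ B F | t.height = α}, ∀ i : Iio α, t.1.val i < δ := by
    rintro ⟨t, rfl⟩ i
    obtain ⟨β, hβB, -, hval⟩ := t.realized
    rw [hval, indicator_of_mem i.2]
    exact (hF i (i.2.trans hα) β hβB).trans_le (le_ciSup (Ordinal.bddAbove_of_small) i)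
  have hinj : Function.Injective fun t i => (⟨t.1.val i, hval t i⟩ : Iio δ) := by
    intro t t' h
    refine Subtype.ext (RealizedSegment.ext (t.2.trans t'.2.symm) ?_)
    rw [← t.1.indicator_val, ← t'.1.indicator_val, t.2, t'.2]
    exact indicator_congr fun i hi => congrArg Subtype.val (congrFun h ⟨i, hi⟩)
  calc #{t : RealizedSegment κ B F | t.height = α} ≤ #(Iio α → Iio δ) := mk_le_of_injective hinj
    _ = Cardinal.lift.{1} (δ.card ^ α.card) := by
      rw [← power_def, Cardinal.mk_Iio_ordinal, Cardinal.mk_Iio_ordinal, lift_power]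
    _ < Cardinal.lift.{1} κ := lift_lt.2 (hsl.power_lt (lt_ord.1 hδ) (lt_ord.1 hα))

theorem isKappaTree (h : IsTreeOrder (IsProperPrefix (κ := κ) (B := B) (F := F)))
    (hreg : κ.IsRegular) (hsl : κ.IsStrongLimit) (hB : ∀ α < κ.ord, ∃ β ∈ B, α ≤ β)
    {γ : Ordinal.{0} → Ordinal.{0}} (hγ : ∀ i < κ.ord, γ i < κ.ord)
    (hF : ∀ i < κ.ord, ∀ β ∈ B, F i β < γ i) : IsKappaTree h κ := by
  refine ⟨fun t => (treeRank_eq h t).trans_lt (Ordinal.lift_lt.2 t.height_lt), fun α hα => ?_⟩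
  obtain ⟨α, hακ, rfl⟩ := Ordinal.lt_lift_iff.1 hα
  simp only [treeRank_eq_lift_iff]
  exact ⟨nonempty_height_eq hB hακ, mk_height_eq_lt hreg hsl hγ hF hακ⟩

section Branch

variable {h : IsTreeOrder (IsProperPrefix (κ := κ) (B := B) (F := F))}
  {b : Set (RealizedSegment κ B F)}

theorem eq_of_mem_branch_of_height_eq (hb : IsTreeBranch h κ b) {s t : RealizedSegment κ B F}
    (hs : s ∈ b) (ht : t ∈ b) (hst : s.height = t.height) : s = t :=
  (hb.2 _ (Ordinal.lift_lt.2 t.height_lt)).unique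
    ⟨hs, (treeRank_eq_lift_iff h s).2 hst⟩ ⟨ht, treeRank_eq h t⟩

theorem val_eq_indicator_of_mem_branch (hb : IsTreeBranch h κ b) {s t : RealizedSegment κ B F}
    (hs : s ∈ b) (ht : t ∈ b) (hst : s.height ≤ t.height) :
    s.val = (Iio s.height).indicator t.val := by
  rcases hst.lt_or_eq with hlt | heq
  · have hrestrict : t.restrict s.height hlt ∈ b :=
      hb.1 t ht _ (t.restrict_isProperPrefix _ hlt)
    exact congrArg val (eq_of_mem_branch_of_height_eq hb hs hrestrict rfl)
  · rw [eq_of_mem_branch_of_height_eq hb hs ht heq, indicator_val]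

theorem exists_isCofinallyRealized_of_isTreeBranch (hb : IsTreeBranch h κ b) :
    ∃ c, IsCofinallyRealized κ B F c := by
  have hexists : ∀ η < κ.ord, ∃ t ∈ b, t.height = η := fun η hη =>
    let ⟨t, ⟨htb, ht⟩, _⟩ := hb.2 _ (Ordinal.lift_lt.2 hη)
    ⟨t, htb, (treeRank_eq_lift_iff h t).1 ht⟩
  choose node hnode_mem hnode_height using hexists
  refine ⟨fun i => if hi : Order.succ i < κ.ord then (node _ hi).val i else 0, fun η hη => ?_⟩
  obtain ⟨β, hβB, hβ, hval⟩ := (node η hη).realized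
  rw [hnode_height η hη] at hβ hval
  refine ⟨β, hβB, hβ, fun i hi => ?_⟩
  have hsucc : Order.succ i ≤ η := Order.succ_le_of_lt hi
  have hi' : Order.succ i < κ.ord := hsucc.trans_lt hη
  have hle : (node _ hi').height ≤ (node η hη).height := by
    rwa [hnode_height _ hi', hnode_height η hη]
  beta_reduce
  rw [dif_pos hi', val_eq_indicator_of_mem_branch hb (hnode_mem _ hi') (hnode_mem η hη) hle, hval,
    hnode_height _ hi', indicator_of_mem (mem_Iio.2 (Order.lt_succ i)),
    indicator_of_mem (mem_Iio.2 hi)]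

end Branch

end RealizedSegment

theorem IsWeaklyCompact.exists_isCofinallyRealized {κ : Cardinal.{0}} (hκ : IsWeaklyCompact κ)
    {B : Set Ordinal.{0}} (hB : ∀ α < κ.ord, ∃ β ∈ B, α ≤ β)
    {F : Ordinal.{0} → Ordinal.{0} → Ordinal.{0}} {γ : Ordinal.{0} → Ordinal.{0}}
    (hγ : ∀ i < κ.ord, γ i < κ.ord) (hF : ∀ i < κ.ord, ∀ β ∈ B, F i β < γ i) :
    ∃ c, IsCofinallyRealized κ B F c := by
  obtain ⟨⟨-, hreg, hsl⟩, htree⟩ := hκ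
  have h := RealizedSegment.isTreeOrder (κ := κ) (B := B) (F := F)
  obtain ⟨b, hb⟩ := htree _ _ h (RealizedSegment.isKappaTree h hreg hsl hB hγ hF)
  exact RealizedSegment.exists_isCofinallyRealized_of_isTreeBranch hb

/-- Lemma 5.2 ("the basic module"): if `κ` is weakly compact, `B ⊆ κ` has
cardinality `κ`, `⟨γ_i⟩` is a `κ`-sequence of nonzero ordinals below `κ`, and
`F_i : κ → γ_i`, then there is `B' ⊆ B` of cardinality `κ` such that each `F_i`
is constant on a tail of `B'`. -/
theorem basic_module (κ : Cardinal.{0}) (hκ : IsWeaklyCompact κ)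
    (B : Set Ordinal) (hB : B ⊆ Set.Iio κ.ord) (hBcard : #B = Cardinal.lift.{1} κ)
    (γ : Ordinal → Ordinal) (hγ : ∀ i < κ.ord, 0 < γ i ∧ γ i < κ.ord)
    (F : Ordinal → Ordinal → Ordinal) (hF : ∀ i < κ.ord, ∀ α < κ.ord, F i α < γ i) :
    ∃ B' ⊆ B, #B' = Cardinal.lift.{1} κ ∧
      ∀ i < κ.ord, ∃ η < κ.ord, ∃ ξ < γ i, ∀ α ∈ B', η ≤ α → F i α = ξ := by
  have hreg : κ.IsRegular := hκ.1.2.1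
  obtain ⟨c, hc⟩ := hκ.exists_isCofinallyRealized ((hreg.mk_eq_lift_iff hB).1 hBcard)
    (fun i hi => (hγ i hi).2) fun i hi β hβ => hF i hi β (hB hβ)
  obtain ⟨B', hB'B, hB'card, htail⟩ := hc.exists_eventually_eq hreg hB
  refine ⟨B', hB'B, hB'card, fun i hi => ?_⟩
  obtain ⟨η, hη, hconst⟩ := htail i hi
  obtain ⟨β, hβB, -, hβc⟩ := hc (Order.succ i) ((isSuccLimit_ord hreg.aleph0_le).succ_lt hi)
  exact ⟨η, hη, c i, hβc i (Order.lt_succ i) ▸ hF i hi β (hB hβB), hconst⟩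
end

section
/- Let κ be a strongly inaccessible cardinal, and suppose that for every κ-sequence of ordinals ⟨γ_i : i < κ⟩ with 0 < γ_i < κ and every κ-sequence of functions ⟨F_i : i < κ⟩ with F_i : κ → γ_i there is a subset B' of κ of cardinality κ such that each F_i is constant on a tail of B' (for every i < κ there exist η < κ and ξ < γ_i with F_i(α) = ξ whenever α ∈ B' and α ≥ η). Then every binary κ-tree has a branch. -/
open Cardinal

/-- The canonical restriction of a (coded) binary sequence to domain `β`:
values below `β` are kept, values at or above `β` are set to `false`. -/
noncomputable def restrictFn (f : Ordinal → Bool) (β : Ordinal) : Ordinal → Bool :=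
  fun γ => if γ < β then f γ else false

/-- A binary `κ`-tree: a set of functions, each with domain an ordinal `< κ`
and values in `{0,1}` (coded as `(α, f)` with `f` vanishing at and above `α`),
closed under restriction to smaller ordinals, and containing a function with
domain `α` for every `α < κ`. -/
def IsBinaryKappaTree (κ : Cardinal.{0}) (S : Set (Ordinal × (Ordinal → Bool))) : Prop :=
  (∀ p ∈ S, p.1 < κ.ord ∧ ∀ γ, p.1 ≤ γ → p.2 γ = false) ∧
  (∀ p ∈ S, ∀ β < p.1, (β, restrictFn p.2 β) ∈ S) ∧
  (∀ α < κ.ord, ∃ p ∈ S, p.1 = α)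

/-- A branch of a binary `κ`-tree: a function `F : κ → 2` all of whose
restrictions to ordinals `< κ` lie in `S`. -/
def IsBinaryBranch (κ : Cardinal.{0}) (S : Set (Ordinal × (Ordinal → Bool)))
    (F : Ordinal → Bool) : Prop :=
  ∀ α < κ.ord, (α, restrictFn F α) ∈ S

/-- If `κ` is strongly inaccessible and the conclusion of the basic module holds
for `B = κ`, then every binary `κ`-tree has a branch. -/
theorem branch_of_tail_constancy (κ : Cardinal.{0})
    (hκ : ℵ₀ < κ ∧ κ.IsRegular ∧ κ.IsStrongLimit)
    (H : ∀ γ : Ordinal → Ordinal, (∀ i < κ.ord, 0 < γ i ∧ γ i < κ.ord) →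
      ∀ F : Ordinal → Ordinal → Ordinal, (∀ i < κ.ord, ∀ α < κ.ord, F i α < γ i) →
      ∃ B' ⊆ Set.Iio κ.ord, #B' = Cardinal.lift.{1} κ ∧
        ∀ i < κ.ord, ∃ η < κ.ord, ∃ ξ < γ i, ∀ α ∈ B', η ≤ α → F i α = ξ) :
    ∀ S : Set (Ordinal × (Ordinal → Bool)), IsBinaryKappaTree κ S →
      ∃ F : Ordinal → Bool, IsBinaryBranch κ S F := by
  classical
  obtain ⟨hℵ₀, hreg, _hsl⟩ := hκ
  rintro S ⟨_hdom, hclosed, hexists⟩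
  choose! p hpS hp1 using hexists
  have h2 : (2 : Ordinal) < κ.ord := by
    have h1 : (2 : Ordinal) < Ordinal.omega0 := by
      exact_mod_cast Ordinal.nat_lt_omega0 2
    have h2' : Ordinal.omega0 ≤ κ.ord := by
      rw [← Cardinal.ord_aleph0]
      exact Cardinal.ord_le_ord.2 hℵ₀.le
    exact h1.trans_le h2'
  obtain ⟨B', hB'sub, hB'card, htail⟩ :=
    H (fun _ => 2) (fun i _ => ⟨by norm_num, h2⟩)
      (fun i α => if (p α).2 i then 1 else 0)
      (fun i _ α _ => by
        show (if (p _).2 _ then (1:Ordinal) else 0) < 2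
        split
        · exact one_lt_two
        · norm_num)
  choose! η hη ξ hξ hconst using htail
  -- B' is unbounded in κ.ord
  have hub : ∀ β < κ.ord, ∃ b ∈ B', β < b := by
    intro β hβ
    by_contra hcon
    push_neg at hcon
    have hsub : B' ⊆ Set.Iio (β + 1) := fun b hb =>
      Order.lt_succ_iff.2 (hcon b hb)
    have h1 : #B' ≤ #(Set.Iio (β + 1)) := Cardinal.mk_le_mk_of_subset hsub
    rw [Ordinal.mk_Iio_ordinal, hB'card] at h1
    have hβ1 : β + 1 < κ.ord := by
      have := (Cardinal.isSuccLimit_ord hℵ₀.le).succ_lt hβ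
      rwa [← Ordinal.add_one_eq_succ] at this
    exact absurd (Cardinal.lift_lt.2 (Cardinal.lt_ord.1 hβ1)) (not_lt.2 h1)
  refine ⟨fun i => if ξ i = 1 then true else false, ?_⟩
  intro α hα
  -- bound the thresholds below α
  have hηs : Ordinal.bsup α (fun i _ => η i) < κ.ord := by
    apply Cardinal.bsup_lt_ord_of_isRegular hreg (Cardinal.lt_ord.1 hα)
    intro i hi
    exact hη i (hi.trans hα)
  set ηs := Ordinal.bsup α (fun i _ => η i) with hηsdef
  obtain ⟨b, hbB, hbgt⟩ := hub (max α ηs) (max_lt hα hηs)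
  have hbκ : b < κ.ord := hB'sub hbB
  have hp1b := hp1 b hbκ
  have hmem : (α, restrictFn (p b).2 α) ∈ S := by
    apply hclosed (p b) (hpS b hbκ)
    rw [hp1b]
    exact (le_max_left α ηs).trans_lt hbgt
  have heq : restrictFn (p b).2 α = restrictFn (fun i => if ξ i = 1 then true else false) α := by
    funext i
    unfold restrictFn
    by_cases hiα : i < α
    · simp only [if_pos hiα]
      have hiκ : i < κ.ord := hiα.trans hα
      have hηb : η i ≤ b := by
        have : η i ≤ ηs := Ordinal.le_bsup (fun i _ => η i) i hiα
        exact this.trans ((le_max_right α ηs).trans hbgt.le)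
      have hval := hconst i hiκ b hbB hηb
      cases hb2 : (p b).2 i with
      | true =>
        rw [hb2] at hval
        simp only [if_true] at hval
        rw [if_pos hval.symm]
      | false =>
        rw [hb2] at hval
        simp only [Bool.false_eq_true, if_false] at hval
        rw [if_neg (by simp [← hval])]
    · simp [hiα]
  rw [← heq]
  exact hmem
end

section
/- Let κ be a strongly inaccessible cardinal. Then every κ-tree has a branch if and only if every binary κ-tree has a branch. -/
open Cardinal

/-!
A binary `κ`-tree is a `κ`-tree under "is a proper restriction of": its level `α` has at most
`2 ^ |α| < κ` elements, and the nodes of a branch are restrictions of one another, so they glue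
to a single function on `κ`.

Conversely, a `κ`-tree `T` has at most `κ` nodes; fix an injection `e : T → κ` and code a node `t`
by the characteristic function of `e '' {s | s ≤ t}`. The restrictions of codes to lengths at
most the rank of the node form a binary `κ`-tree. If `F` is a branch of it, then for every `β < κ`
there is a node `t` of rank at least `β` such that, among the nodes `s` with `e s < β`,
`F (e s) = 1` holds exactly for those with `s ≤ t`. By regularity, fewer than `κ` nodes have codes below a
common `β < κ`. Applied to pairs of nodes, this shows that `{s | F (e s) = 1}` is a downward closed
chain; applied to the nodes of rank at most `α`, it shows that the chain meets level `α`.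
-/

universe u

section Restrict

variable {f : Ordinal → Bool} {β γ : Ordinal}

theorem restrictFn_of_lt (h : γ < β) : restrictFn f β γ = f γ := if_pos h

theorem restrictFn_of_le (h : β ≤ γ) : restrictFn f β γ = false := if_neg h.not_gt

theorem restrictFn_restrictFn (h : γ ≤ β) :
    restrictFn (restrictFn f β) γ = restrictFn f γ := by
  funext ξ
  rcases lt_or_ge ξ γ with hξ | hξ
  · rw [restrictFn_of_lt hξ, restrictFn_of_lt hξ, restrictFn_of_lt (hξ.trans_le h)]
  · rw [restrictFn_of_le hξ, restrictFn_of_le hξ]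

theorem restrictFn_eq_self (hf : ∀ γ, β ≤ γ → f γ = false) : restrictFn f β = f := by
  funext γ
  rcases lt_or_ge γ β with hγ | hγ
  · exact restrictFn_of_lt hγ
  · rw [restrictFn_of_le hγ, hf γ hγ]

end Restrict

namespace IsTreeOrder

variable {T : Type u} {lt : T → T → Prop} (h : IsTreeOrder lt) {s t : T}

def segRelIsoSubrel (hst : lt s t) :
    segRel lt s ≃r Subrel (segRel lt t) {y | segRel lt t y ⟨s, hst⟩} where
  toFun y := ⟨⟨y.1, h.trans y.2 hst⟩, y.2⟩
  invFun z := ⟨z.1.1, z.2⟩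
  left_inv _ := rfl
  right_inv _ := rfl
  map_rel_iff' := Iff.rfl

theorem treeRank_eq_typein (hst : lt s t) :
    treeRank h s = @Ordinal.typein _ (segRel lt t) (h.wo t) ⟨s, hst⟩ := by
  have := h.wo t
  have := h.wo s
  rw [← Ordinal.type_subrel]
  exact RelIso.ordinalType_congr (h.segRelIsoSubrel hst)

theorem treeRank_lt_treeRank (hst : lt s t) : treeRank h s < treeRank h t := by
  have := h.wo t
  rw [h.treeRank_eq_typein hst]
  exact Ordinal.typein_lt_type _ _

theorem exists_lt_treeRank_eq {ρ : Ordinal} (hρ : ρ < treeRank h t) :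
    ∃ s, lt s t ∧ treeRank h s = ρ := by
  have := h.wo t
  obtain ⟨s, hs⟩ := Ordinal.typein_surj (segRel lt t) hρ
  exact ⟨s.1, s.2, (h.treeRank_eq_typein s.2).trans hs⟩

theorem trichotomous_of_le (h : IsTreeOrder lt) {s' : T} (hs : lt s t ∨ s = t)
    (hs' : lt s' t ∨ s' = t) : lt s s' ∨ s = s' ∨ lt s' s := by
  rcases hs with hs | rfl <;> rcases hs' with hs' | rfl
  · have := h.wo t
    rcases trichotomous_of (segRel lt t) ⟨s, hs⟩ ⟨s', hs'⟩ with h' | h' | h'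
    · exact Or.inl h'
    · exact Or.inr (Or.inl (congrArg Subtype.val h'))
    · exact Or.inr (Or.inr h')
  · exact Or.inl hs
  · exact Or.inr (Or.inr hs')
  · exact Or.inr (Or.inl rfl)

end IsTreeOrder

theorem IsTreeBranch.eq_of_treeRank_eq {T : Type 1} {lt : T → T → Prop} {h : IsTreeOrder lt}
    {κ : Cardinal.{0}} {b : Set T} (hb : IsTreeBranch h κ b) {s t : T} (hs : s ∈ b) (ht : t ∈ b)
    (hst : treeRank h s = treeRank h t) (htκ : treeRank h t < Ordinal.lift.{1} κ.ord) : s = t :=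
  (hb.2 _ htκ).unique ⟨hs, hst⟩ ⟨ht, rfl⟩

section BinaryTree

variable {S : Set (Ordinal.{0} × (Ordinal → Bool))}

def binaryTreeLt (S : Set (Ordinal.{0} × (Ordinal → Bool))) : S → S → Prop :=
  fun p q => p.1.1 < q.1.1 ∧ p.1.2 = restrictFn q.1.2 p.1.1

def segBinaryTreeLtEmbedding (q : S) :
    segRel (binaryTreeLt S) q ↪r Subrel ((· < ·) : Ordinal → Ordinal → Prop) (· < q.1.1) where
  toFun p := ⟨p.1.1.1, p.2.1⟩
  inj' p p' hpp' := by
    have hα : p.1.1.1 = p'.1.1.1 := congrArg Subtype.val hpp'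
    exact Subtype.ext <| Subtype.ext <| Prod.ext hα (by rw [p.2.2, p'.2.2, hα])
  map_rel_iff' {p p'} := by
    refine ⟨fun hlt => ⟨hlt, ?_⟩, And.left⟩
    rw [p.2.2, p'.2.2, restrictFn_restrictFn (show p.1.1.1 < p'.1.1.1 from hlt).le]

theorem isTreeOrder_binaryTreeLt (S : Set (Ordinal.{0} × (Ordinal → Bool))) :
    IsTreeOrder (binaryTreeLt S) where
  trans := by
    rintro p q r ⟨hpq, hp⟩ ⟨hqr, hq⟩
    exact ⟨hpq.trans hqr, by rw [hp, hq, restrictFn_restrictFn hpq.le]⟩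
  wo q := (segBinaryTreeLtEmbedding q).isWellOrder

theorem treeRank_binaryTreeLt (hS : ∀ p ∈ S, ∀ β < p.1, (β, restrictFn p.2 β) ∈ S) (q : S) :
    treeRank (isTreeOrder_binaryTreeLt S) q = Ordinal.lift.{1} q.1.1 := by
  have hsurj : Function.Surjective (segBinaryTreeLtEmbedding q) := fun β =>
    ⟨⟨⟨_, hS q.1 q.2 β.1 β.2⟩, β.2, rfl⟩, rfl⟩
  have := (isTreeOrder_binaryTreeLt S).wo q
  exact (RelIso.ofSurjective _ hsurj).ordinalType_congr.trans (Ordinal.typein_ordinal _)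

theorem mk_setOf_fst_eq_le (hS : ∀ p ∈ S, ∀ γ, p.1 ≤ γ → p.2 γ = false) (α : Ordinal) :
    #{p : S | p.1.1 = α} ≤ Cardinal.lift.{1} (2 ^ α.card) := by
  have hinj : Function.Injective fun (p : {p : S | p.1.1 = α}) (ξ : Set.Iio α) => p.1.1.2 ξ := by
    rintro ⟨⟨p, hp⟩, hpα : p.1 = α⟩ ⟨⟨q, hq⟩, hqα : q.1 = α⟩ hpq
    have hfun : p.2 = q.2 := by
      rw [← restrictFn_eq_self (hS p hp), ← restrictFn_eq_self (hS q hq), hpα, hqα]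
      funext γ
      rcases lt_or_ge γ α with hγ | hγ
      · rw [restrictFn_of_lt hγ, restrictFn_of_lt hγ]
        exact congrFun hpq ⟨γ, hγ⟩
      · rw [restrictFn_of_le hγ, restrictFn_of_le hγ]
    simp only [Subtype.mk.injEq]
    exact Prod.ext (hpα.trans hqα.symm) hfun
  refine (Cardinal.mk_le_of_injective hinj).trans_eq ?_
  simp [Cardinal.lift_power]

theorem treeRank_binaryTreeLt_lt {κ : Cardinal.{0}} (hS : IsBinaryKappaTree κ S) (q : S) :
    treeRank (isTreeOrder_binaryTreeLt S) q < Ordinal.lift.{1} κ.ord := by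
  rw [treeRank_binaryTreeLt hS.2.1, Ordinal.lift_lt]
  exact (hS.1 q.1 q.2).1

theorem isKappaTree_binaryTreeLt {κ : Cardinal.{0}} (hκ : κ.IsStrongPrelimit)
    (hS : IsBinaryKappaTree κ S) : IsKappaTree (isTreeOrder_binaryTreeLt S) κ := by
  refine ⟨treeRank_binaryTreeLt_lt hS, fun α hα => ?_⟩
  obtain ⟨α, hακ, rfl⟩ := Ordinal.lt_lift_iff.1 hα
  have hlevel : {t | treeRank (isTreeOrder_binaryTreeLt S) t = Ordinal.lift.{1} α} =
      {p : S | p.1.1 = α} := by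
    ext p
    simp [treeRank_binaryTreeLt hS.2.1]
  rw [hlevel]
  obtain ⟨p, hp, hpα⟩ := hS.2.2 α hακ
  refine ⟨⟨⟨p, hp⟩, hpα⟩, (mk_setOf_fst_eq_le (fun p hp => (hS.1 p hp).2) α).trans_lt ?_⟩
  exact Cardinal.lift_lt.2 (hκ (Cardinal.lt_ord.1 hακ))

variable {κ : Cardinal.{0}} {b : Set S}

theorem snd_eq_restrictFn_of_mem_branch (hS : IsBinaryKappaTree κ S)
    (hb : IsTreeBranch (isTreeOrder_binaryTreeLt S) κ b) {p q : S} (hp : p ∈ b) (hq : q ∈ b)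
    (hpq : p.1.1 ≤ q.1.1) : p.1.2 = restrictFn q.1.2 p.1.1 := by
  rcases hpq.lt_or_eq with hpq | hpq
  · let r : S := ⟨(p.1.1, restrictFn q.1.2 p.1.1), hS.2.1 q.1 q.2 _ hpq⟩
    have hr : r ∈ b := hb.1 q hq r ⟨hpq, rfl⟩
    have hrp : r = p := hb.eq_of_treeRank_eq hr hp
      (by rw [treeRank_binaryTreeLt hS.2.1, treeRank_binaryTreeLt hS.2.1])
      (treeRank_binaryTreeLt_lt hS p)
    rw [← hrp]
  · obtain rfl : p = q := hb.eq_of_treeRank_eq hp hq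
      (by rw [treeRank_binaryTreeLt hS.2.1, treeRank_binaryTreeLt hS.2.1, hpq])
      (treeRank_binaryTreeLt_lt hS q)
    exact (restrictFn_eq_self (hS.1 p.1 p.2).2).symm

open Classical in
noncomputable def branchUnion (b : Set S) : Ordinal → Bool :=
  fun γ => decide (∃ p ∈ b, γ < p.1.1 ∧ p.1.2 γ = true)

open Classical in
theorem branchUnion_apply (hS : IsBinaryKappaTree κ S)
    (hb : IsTreeBranch (isTreeOrder_binaryTreeLt S) κ b) {p : S} (hp : p ∈ b) {γ : Ordinal}
    (hγ : γ < p.1.1) : branchUnion b γ = p.1.2 γ := by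
  have hcoh : ∀ q ∈ b, γ < q.1.1 → q.1.2 γ = p.1.2 γ := by
    intro q hq hγq
    rcases le_total q.1.1 p.1.1 with hqp | hpq
    · rw [snd_eq_restrictFn_of_mem_branch hS hb hq hp hqp, restrictFn_of_lt hγq]
    · rw [snd_eq_restrictFn_of_mem_branch hS hb hp hq hpq, restrictFn_of_lt hγ]
  rw [Bool.eq_iff_iff, branchUnion, decide_eq_true_iff]
  exact ⟨fun ⟨q, hq, hγq, hqγ⟩ => hcoh q hq hγq ▸ hqγ, fun hpγ => ⟨p, hp, hγ, hpγ⟩⟩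

theorem isBinaryBranch_branchUnion (hS : IsBinaryKappaTree κ S)
    (hb : IsTreeBranch (isTreeOrder_binaryTreeLt S) κ b) :
    IsBinaryBranch κ S (branchUnion b) := by
  intro α hα
  obtain ⟨p, ⟨hp, hpα⟩, -⟩ := hb.2 (Ordinal.lift.{1} α) (Ordinal.lift_lt.2 hα)
  rw [treeRank_binaryTreeLt hS.2.1, Ordinal.lift_inj] at hpα
  have hrestrict : restrictFn (branchUnion b) α = p.1.2 := by
    rw [← restrictFn_eq_self (hS.1 p.1 p.2).2, hpα]
    funext γ
    rcases lt_or_ge γ α with hγ | hγ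
    · rw [restrictFn_of_lt hγ, restrictFn_of_lt hγ, branchUnion_apply hS hb hp (hpα ▸ hγ)]
    · rw [restrictFn_of_le hγ, restrictFn_of_le hγ]
  rw [hrestrict, ← hpα]
  exact p.2

end BinaryTree

theorem exists_forall_lt_of_mk_lt {κ : Cardinal.{0}} (hκ : κ.IsRegular) {s : Set Ordinal.{0}}
    (hs : #s < Cardinal.lift.{1} κ) (hsκ : ∀ γ ∈ s, γ < κ.ord) : ∃ β < κ.ord, ∀ γ ∈ s, γ < β := by
  refine ⟨sSup ((· + 1) '' s), Ordinal.sSup_add_one_lt_of_lt_cof ?_ hsκ, fun γ hγ => ?_⟩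
  · rwa [← Ordinal.lift_cof, hκ.cof_ord]
  · have hbdd : BddAbove ((· + 1) '' s) :=
      ⟨κ.ord, by rintro _ ⟨γ, hγ, rfl⟩; exact Order.add_one_le_of_lt (hsκ γ hγ)⟩
    exact (Order.lt_add_one_iff.2 le_rfl).trans_le (le_csSup hbdd ⟨γ, hγ, rfl⟩)

section KappaTree

variable {T : Type 1} {lt : T → T → Prop} {h : IsTreeOrder lt} {κ : Cardinal.{0}}

theorem IsKappaTree.mk_le (hκ : ℵ₀ ≤ κ) (hT : IsKappaTree h κ) : #T ≤ Cardinal.lift.{1} κ := by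
  have hcover : (Set.univ : Set T) ⊆ ⋃ α < κ.ord, {t | treeRank h t = Ordinal.lift.{1} α} := by
    intro t _
    obtain ⟨α, hα, hαt⟩ := Ordinal.lt_lift_iff.1 (hT.1 t)
    exact Set.mem_iUnion₂.2 ⟨α, hα, hαt.symm⟩
  rw [← Cardinal.mk_univ]
  refine (Cardinal.mk_le_mk_of_subset hcover).trans
    (Cardinal.mk_biUnion_le_of_le_lift ?_ (Cardinal.aleph0_le_lift.2 hκ) _
      fun α hα => (hT.2 _ (Ordinal.lift_lt.2 hα)).2.le)
  simp

theorem IsKappaTree.mk_setOf_treeRank_le_lt (hκ : κ.IsRegular) (hT : IsKappaTree h κ)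
    {α : Ordinal} (hα : α < κ.ord) :
    #{t | treeRank h t ≤ Ordinal.lift.{1} α} < Cardinal.lift.{1} κ := by
  have hsucc : Order.succ α < κ.ord := (Cardinal.isSuccLimit_ord hκ.aleph0_le).succ_lt hα
  have hcover : {t | treeRank h t ≤ Ordinal.lift.{1} α} ⊆
      ⋃ β ∈ Set.Iio (Order.succ α), {t | treeRank h t = Ordinal.lift.{1} β} := by
    intro t (ht : treeRank h t ≤ Ordinal.lift.{1} α)
    obtain ⟨β, hβ, hβt⟩ := Ordinal.le_lift_iff.1 ht
    exact Set.mem_biUnion (Order.lt_succ_of_le hβ) hβt.symm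
  refine (Cardinal.mk_le_mk_of_subset hcover).trans_lt
    ((Cardinal.card_biUnion_lt_iff_forall_of_isRegular hκ.lift ?_).2
      fun β hβ => (hT.2 _ (Ordinal.lift_lt.2 (hβ.trans hsucc))).2)
  rw [Cardinal.mk_Iio_ordinal, Cardinal.lift_lt]
  exact Cardinal.lt_ord.1 hsucc

end KappaTree

section Coding

variable {T : Type u} {lt : T → T → Prop} {e : T → Ordinal} {s t : T}

open Classical in
noncomputable def pathCode (lt : T → T → Prop) (e : T → Ordinal) (t : T) : Ordinal → Bool :=
  fun ξ => decide (∃ s, (lt s t ∨ s = t) ∧ e s = ξ)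

open Classical in
theorem pathCode_apply_eq_true_iff (he : e.Injective) :
    pathCode lt e t (e s) = true ↔ lt s t ∨ s = t := by
  rw [pathCode, decide_eq_true_iff]
  exact ⟨fun ⟨s', hs', hes⟩ => he hes ▸ hs', fun hs => ⟨s, hs, rfl⟩⟩

end Coding

section CodeTree

variable {T : Type 1} {lt : T → T → Prop} {h : IsTreeOrder lt} {κ : Cardinal.{0}}
  {e : T → Ordinal} {F : Ordinal → Bool}

def codeTree (h : IsTreeOrder lt) (κ : Cardinal.{0}) (e : T → Ordinal) :
    Set (Ordinal × (Ordinal → Bool)) :=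
  {p | ∃ t, ∃ α < κ.ord, Ordinal.lift.{1} α ≤ treeRank h t ∧
    p = (α, restrictFn (pathCode lt e t) α)}

theorem isBinaryKappaTree_codeTree (hT : IsKappaTree h κ) :
    IsBinaryKappaTree κ (codeTree h κ e) := by
  refine ⟨?_, ?_, fun α hα => ?_⟩
  · rintro _ ⟨t, α, hα, -, rfl⟩
    exact ⟨hα, fun γ hγ => restrictFn_of_le hγ⟩
  · rintro _ ⟨t, α, hα, hαt, rfl⟩ β hβ
    refine ⟨t, β, hβ.trans hα, (Ordinal.lift_le.2 hβ.le).trans hαt, ?_⟩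
    rw [restrictFn_restrictFn hβ.le]
  · obtain ⟨t, ht⟩ := (hT.2 _ (Ordinal.lift_lt.2 hα)).1
    exact ⟨_, ⟨t, α, hα, ht.ge, rfl⟩, rfl⟩

theorem exists_path_of_isBinaryBranch (he : e.Injective)
    (hF : IsBinaryBranch κ (codeTree h κ e) F) {α : Ordinal} (hα : α < κ.ord) :
    ∃ t, Ordinal.lift.{1} α ≤ treeRank h t ∧
      ∀ s, e s < α → (F (e s) = true ↔ lt s t ∨ s = t) := by
  obtain ⟨t, α', -, hαt, hFt⟩ := hF α hα
  obtain ⟨rfl, hFt⟩ := Prod.mk.inj hFt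
  refine ⟨t, hαt, fun s hs => ?_⟩
  rw [← pathCode_apply_eq_true_iff he, ← restrictFn_of_lt (f := F) hs, hFt,
    restrictFn_of_lt hs]

theorem exists_path_of_mk_lt (hκ : κ.IsRegular) (he : e.Injective) (heκ : ∀ t, e t < κ.ord)
    (hF : IsBinaryBranch κ (codeTree h κ e) F) {X : Set T} (hX : #X < Cardinal.lift.{1} κ)
    {α : Ordinal} (hα : α < κ.ord) :
    ∃ t, Ordinal.lift.{1} α ≤ treeRank h t ∧ ∀ s ∈ X, (F (e s) = true ↔ lt s t ∨ s = t) := by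
  obtain ⟨β, hβ, hXβ⟩ := exists_forall_lt_of_mk_lt hκ (Cardinal.mk_image_le.trans_lt hX)
    (by rintro _ ⟨s, -, rfl⟩; exact heκ s)
  obtain ⟨t, hβt, ht⟩ := exists_path_of_isBinaryBranch he hF (max_lt hβ hα)
  refine ⟨t, (Ordinal.lift_le.2 (le_max_right β α)).trans hβt, fun s hs => ht s ?_⟩
  exact (hXβ _ ⟨s, hs, rfl⟩).trans_le (le_max_left β α)


theorem exists_path_of_pair (hκ : κ.IsRegular) (he : e.Injective) (heκ : ∀ t, e t < κ.ord)
    (hF : IsBinaryBranch κ (codeTree h κ e) F) (s₁ s₂ : T) :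
    ∃ t, (F (e s₁) = true ↔ lt s₁ t ∨ s₁ = t) ∧ (F (e s₂) = true ↔ lt s₂ t ∨ s₂ = t) := by
  have hpair : #({s₁, s₂} : Set T) < Cardinal.lift.{1} κ :=
    (Set.toFinite _).lt_aleph0.trans_le (Cardinal.aleph0_le_lift.2 hκ.aleph0_le)
  obtain ⟨t, -, ht⟩ := exists_path_of_mk_lt hκ he heκ hF hpair (heκ s₁)
  exact ⟨t, ht s₁ (by simp), ht s₂ (by simp)⟩

theorem trichotomous_of_isBinaryBranch (hκ : κ.IsRegular) (he : e.Injective)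
    (heκ : ∀ t, e t < κ.ord) (hF : IsBinaryBranch κ (codeTree h κ e) F) {s s' : T}
    (hs : F (e s) = true) (hs' : F (e s') = true) : lt s s' ∨ s = s' ∨ lt s' s := by
  obtain ⟨t, hst, hs't⟩ := exists_path_of_pair hκ he heκ hF s s'
  exact h.trichotomous_of_le (hst.1 hs) (hs't.1 hs')

theorem isTreeBranch_of_isBinaryBranch (hκ : κ.IsRegular) (hT : IsKappaTree h κ)
    (he : e.Injective) (heκ : ∀ t, e t < κ.ord) (hF : IsBinaryBranch κ (codeTree h κ e) F) :
    IsTreeBranch h κ {s | F (e s) = true} := by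
  refine ⟨fun x (hx : F (e x) = true) y hyx => ?_, fun α hα => ?_⟩
  · obtain ⟨t, hxt, hyt⟩ := exists_path_of_pair hκ he heκ hF x y
    refine hyt.2 (Or.inl ?_)
    rcases hxt.1 hx with hxt | rfl
    · exact h.trans hyx hxt
    · exact hyx
  · obtain ⟨α, hακ, rfl⟩ := Ordinal.lt_lift_iff.1 hα
    have hsucc : Order.succ α < κ.ord := (Cardinal.isSuccLimit_ord hκ.aleph0_le).succ_lt hακ
    obtain ⟨t, hαt, ht⟩ :=
      exists_path_of_mk_lt hκ he heκ hF (hT.mk_setOf_treeRank_le_lt hκ hακ) hsucc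
    obtain ⟨s, hst, hs⟩ :=
      h.exists_lt_treeRank_eq ((Ordinal.lift_lt.2 (Order.lt_succ α)).trans_le hαt)
    have hsF : F (e s) = true := (ht s hs.le).2 (Or.inl hst)
    refine ⟨s, ⟨hsF, hs⟩, fun s' ⟨hs'F, hs'⟩ => ?_⟩
    rcases trichotomous_of_isBinaryBranch hκ he heκ hF hs'F hsF with hlt | heq | hlt
    · exact absurd (h.treeRank_lt_treeRank hlt) (by rw [hs, hs']; exact lt_irrefl _)
    · exact heq
    · exact absurd (h.treeRank_lt_treeRank hlt) (by rw [hs, hs']; exact lt_irrefl _)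

theorem exists_isTreeBranch_of_binaryTreeProperty (hκ : κ.IsRegular)
    (H : ∀ S : Set (Ordinal × (Ordinal → Bool)), IsBinaryKappaTree κ S →
      ∃ F : Ordinal → Bool, IsBinaryBranch κ S F)
    (hT : IsKappaTree h κ) : ∃ b : Set T, IsTreeBranch h κ b := by
  obtain ⟨e⟩ : Nonempty (T ↪ Set.Iio κ.ord) := by
    rw [← Cardinal.le_def, Cardinal.mk_Iio_ordinal, Cardinal.card_ord]
    exact hT.mk_le hκ.aleph0_le
  obtain ⟨F, hF⟩ := H _ (isBinaryKappaTree_codeTree (e := fun t => (e t).1) hT)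
  exact ⟨_, isTreeBranch_of_isBinaryBranch hκ hT (Subtype.val_injective.comp e.injective)
    (fun t => (e t).2) hF⟩

end CodeTree

/-- For a strongly inaccessible `κ`, every `κ`-tree has a branch iff every
binary `κ`-tree has a branch. -/
theorem tree_property_iff_binary_tree_property (κ : Cardinal.{0})
    (hκ : IsStronglyInaccessible κ) :
    (∀ (T : Type 1) (lt : T → T → Prop) (h : IsTreeOrder lt),
        IsKappaTree h κ → ∃ b : Set T, IsTreeBranch h κ b) ↔
    (∀ S : Set (Ordinal × (Ordinal → Bool)), IsBinaryKappaTree κ S →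
        ∃ F : Ordinal → Bool, IsBinaryBranch κ S F) := by
  obtain ⟨-, hreg, hlim⟩ := hκ
  refine ⟨fun H S hS => ?_, fun H T lt h hT => exists_isTreeBranch_of_binaryTreeProperty hreg H hT⟩
  obtain ⟨b, hb⟩ := H S (binaryTreeLt S) _ (isKappaTree_binaryTreeLt hlim.isStrongPrelimit hS)
  exact ⟨branchUnion b, isBinaryBranch_branchUnion hS hb⟩
end

section
/- Let κ be a regular uncountable cardinal, B a subset of κ of cardinality κ, and G : κ → κ. Let a₀ ≤ b₀ and a₁ ≤ b₁ be integers with a₀ < a₁ and b₀ < b₁, and set n₀ = b₀ − a₀ + 1, n₁ = b₁ − a₁ + 1, n₂ = b₁ − a₀ + 1, r = n₂ − n₁ + 1 (so r ≥ 2). Let F₀ be a function of n₀ ordinal arguments and F₁ a function of n₁ ordinal arguments, both with values in a set A, such that for every increasing G-spread-apart sequence θ₁ < θ₂ < ... < θ_{n₂} of elements of B one has F₀(θ₁,...,θ_{n₀}) = F₁(θ_r,...,θ_{n₂}). Then for every sequence θ₀ < θ₁ < θ₂ < ... < θ_{n₀} of elements of B such that both tuples (θ₀, θ₂, θ₃,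 ..., θ_{n₀}) and (θ₁, θ₂, ..., θ_{n₀}) are G spread apart, one has F₀(θ₀, θ₂, θ₃, ..., θ_{n₀}) = F₀(θ₁, θ₂, ..., θ_{n₀}). -/
open Cardinal

/-! Extend the two tuples `(θ₀, θ₂, …, θ_{n₀})` and `(θ₁, θ₂, …, θ_{n₀})` by one and the same
`G` spread apart sequence from `B` lying above all the `θᵢ` and `G θᵢ`; such a sequence exists because
`B` is unbounded in `κ`, and `κ` is closed under `G`. Both extensions are admissible `n₂`-tuples,
so `F₀` of each tuple equals `F₁` of the last `n₁` entries of its extension. Since `r ≥ 2`, these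
entries omit the first coordinate, where alone the two extensions differ. -/

/-- An increasing tuple `θ₁ < ... < θₙ` is `G` spread apart if `G 0 < θ₁` and
`G θᵢ₋₁ < θᵢ` for each `i`. -/
def SpreadApartFin {n : ℕ} (G : Ordinal → Ordinal) (θ : Fin n → Ordinal) : Prop :=
  List.Chain (fun a b => G a < b) 0 (List.ofFn θ)

def SpreadApartSeq (G : Ordinal → Ordinal) (E : ℕ → Ordinal) : Prop :=
  G 0 < E 0 ∧ ∀ k, G (E k) < E (k + 1)

def appendSeq {α : Type*} {n : ℕ} (p : Fin n → α) (β : ℕ → α) (k : ℕ) : α :=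
  if h : k < n then p ⟨k, h⟩ else β (k - n)

section appendSeq

variable {α : Type*} {n : ℕ} {p : Fin n → α} {β : ℕ → α}

lemma appendSeq_val (i : Fin n) : appendSeq p β i = p i := dif_pos i.isLt

lemma appendSeq_apply_of_le {k : ℕ} (hk : n ≤ k) : appendSeq p β k = β (k - n) :=
  dif_neg (by omega)

lemma appendSeq_mem {s : Set α} (hp : ∀ i, p i ∈ s) (hβ : ∀ j, β j ∈ s) (k : ℕ) :
    appendSeq p β k ∈ s := by
  unfold appendSeq
  split_ifs
  exacts [hp _, hβ _]

lemma appendSeq_congr_of_le {q : Fin n → α} {m : ℕ} (hpq : ∀ i : Fin n, m ≤ i → p i = q i)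
    {k : ℕ} (hk : m ≤ k) : appendSeq p β k = appendSeq q β k := by
  unfold appendSeq
  split_ifs with h
  exacts [hpq ⟨k, h⟩ hk, rfl]

lemma appendSeq_rel_succ {R : α → α → Prop}
    (hp : ∀ (i : ℕ) (h : i + 1 < n), R (p ⟨i, by omega⟩) (p ⟨i + 1, h⟩))
    (hβ : ∀ j, R (β j) (β (j + 1))) (hlast : ∀ i, R (p i) (β 0)) (k : ℕ) :
    R (appendSeq p β k) (appendSeq p β (k + 1)) := by
  rcases lt_trichotomy (k + 1) n with h | h | h
  · rw [appendSeq_val (⟨k, by omega⟩ : Fin n), appendSeq_val (⟨k + 1, h⟩ : Fin n)]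
    exact hp k h
  · rw [appendSeq_val (⟨k, by omega⟩ : Fin n), appendSeq_apply_of_le h.ge, h, Nat.sub_self]
    exact hlast _
  · rw [appendSeq_apply_of_le (by omega : n ≤ k), appendSeq_apply_of_le h.le,
      show k + 1 - n = k - n + 1 by omega]
    exact hβ _

lemma strictMono_appendSeq [Preorder α] (hp : StrictMono p) (hβ : ∀ j, β j < β (j + 1))
    (hlast : ∀ i, p i < β 0) : StrictMono (appendSeq p β) :=
  strictMono_nat_of_lt_succ <|
    appendSeq_rel_succ (fun _ _ => hp (Fin.mk_lt_mk.2 (Nat.lt_succ_self _))) hβ hlast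

end appendSeq

section

variable {G : Ordinal → Ordinal}

lemma spreadApartFin_iff {n : ℕ} (θ : Fin n → Ordinal) :
    SpreadApartFin G θ ↔ (∀ h : 0 < n, G 0 < θ ⟨0, h⟩) ∧
      ∀ (i : ℕ) (h : i + 1 < n), G (θ ⟨i, by omega⟩) < θ ⟨i + 1, h⟩ := by
  unfold SpreadApartFin
  rw [List.Chain, List.isChain_iff_getElem]
  simp only [List.length_cons, List.length_ofFn]
  constructor
  · intro h
    exact ⟨fun _ => by simpa using h 0 (by omega), fun i _ => by simpa using h (i + 1) (by omega)⟩
  · rintro ⟨h0, hsucc⟩ (_ | i) hi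
    · simpa using h0 (by omega)
    · simpa using hsucc i (by omega)

lemma SpreadApartSeq.spreadApartFin {E : ℕ → Ordinal} (hE : SpreadApartSeq G E) (m : ℕ) :
    SpreadApartFin G (fun i : Fin m => E i) :=
  (spreadApartFin_iff _).2 ⟨fun _ => hE.1, fun i _ => hE.2 i⟩

lemma spreadApartSeq_appendSeq {n : ℕ} {p : Fin n → Ordinal} {β : ℕ → Ordinal} (hn : 0 < n)
    (hp : SpreadApartFin G p) (hβ : ∀ j, G (β j) < β (j + 1)) (hlast : ∀ i, G (p i) < β 0) :
    SpreadApartSeq G (appendSeq p β) := by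
  obtain ⟨hp0, hpsucc⟩ := (spreadApartFin_iff p).1 hp
  refine ⟨?_, appendSeq_rel_succ (R := fun a b => G a < b) hpsucc hβ hlast⟩
  rw [appendSeq_val (⟨0, hn⟩ : Fin n)]
  exact hp0 hn

end

lemma exists_mem_gt_of_mk_eq {κ : Cardinal.{0}} (hκ : ℵ₀ ≤ κ) {B : Set Ordinal}
    (hBcard : #B = Cardinal.lift.{1} κ) {γ : Ordinal} (hγ : γ < κ.ord) : ∃ β ∈ B, γ < β := by
  by_contra! hB
  have hcard : #B ≤ #(Set.Iio (Order.succ γ)) :=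
    Cardinal.mk_le_mk_of_subset fun β hβ => Order.lt_succ_iff.2 (hB β hβ)
  rw [Cardinal.mk_Iio_ordinal, hBcard, Cardinal.lift_le] at hcard
  exact hcard.not_gt (Cardinal.lt_ord.1 ((Cardinal.isSuccLimit_ord hκ).succ_lt hγ))

lemma exists_spreadApart_seq_mem {α : Type*} [LinearOrder α] {B : Set α} {o : α} {G : α → α}
    (hB : B ⊆ Set.Iio o) (hunb : ∀ γ < o, ∃ β ∈ B, γ < β) (hG : ∀ a < o, G a < o)
    {γ : α} (hγ : γ < o) :
    ∃ β : ℕ → α, (∀ j, β j ∈ B) ∧ γ < β 0 ∧ ∀ j, β j < β (j + 1) ∧ G (β j) < β (j + 1) := by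
  have hstep : ∀ δ < o, ∃ β ∈ B, δ < β ∧ G δ < β := fun δ hδ => by
    simpa only [max_lt_iff] using hunb (max δ (G δ)) (max_lt hδ (hG δ hδ))
  choose! next hnextB hnext_gt hnext_G using hstep
  let β : ℕ → α := fun j => Nat.rec (next γ) (fun _ b => next b) j
  have hβB : ∀ j, β j ∈ B := fun j => by
    induction j with
    | zero => exact hnextB γ hγ
    | succ j ih => exact hnextB _ (hB ih)
  exact ⟨β, hβB, hnext_gt γ hγ, fun j => ⟨hnext_gt _ (hB (hβB j)), hnext_G _ (hB (hβB j))⟩⟩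

/-- The key step in the minimum-block-support lemma: if `F₀` (of `n₀ = b₀-a₀+1`
arguments) and `F₁` (of `n₁ = b₁-a₁+1` arguments) agree as indicated on all
increasing `G` spread apart `n₂`-tuples from `B` (`n₂ = b₁-a₀+1`,
`r = n₂-n₁+1`), then `F₀` does not depend on its first argument on such
tuples: `F₀(θ₀,θ₂,…,θ_{n₀}) = F₀(θ₁,θ₂,…,θ_{n₀})`. -/
theorem drop_first_argument (κ : Cardinal.{0}) (hunc : ℵ₀ < κ)
    (B : Set Ordinal) (hB : B ⊆ Set.Iio κ.ord) (hBcard : #B = Cardinal.lift.{1} κ)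
    (G : Ordinal → Ordinal) (hG : ∀ α < κ.ord, G α < κ.ord)
    (a₀ b₀ a₁ b₁ : ℤ) (h₀ : a₀ ≤ b₀) (ha : a₀ < a₁) (hb : b₀ < b₁)
    (n₀ n₁ n₂ r : ℕ)
    (hn₀ : (n₀ : ℤ) = b₀ - a₀ + 1) (hn₁ : (n₁ : ℤ) = b₁ - a₁ + 1)
    (hn₂ : (n₂ : ℤ) = b₁ - a₀ + 1) (hr : (r : ℤ) = (n₂ : ℤ) - (n₁ : ℤ) + 1)
    {A : Type*} (F₀ : (Fin n₀ → Ordinal) → A) (F₁ : (Fin n₁ → Ordinal) → A)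
    (hF : ∀ θ : Fin n₂ → Ordinal, StrictMono θ → (∀ i, θ i ∈ B) →
      SpreadApartFin G θ →
      F₀ (fun i => θ ⟨i.1, by have := i.isLt; omega⟩) =
        F₁ (fun i => θ ⟨r - 1 + i.1, by have := i.isLt; omega⟩)) :
    ∀ θ : Fin (n₀ + 1) → Ordinal, StrictMono θ → (∀ i, θ i ∈ B) →
      SpreadApartFin G
        (fun i : Fin n₀ => if i.1 = 0 then θ 0 else θ ⟨i.1 + 1, by have := i.isLt; omega⟩) →
      SpreadApartFin G (fun i : Fin n₀ => θ ⟨i.1 + 1, by have := i.isLt; omega⟩) →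
      F₀ (fun i : Fin n₀ =>
            if i.1 = 0 then θ 0 else θ ⟨i.1 + 1, by have := i.isLt; omega⟩) =
        F₀ (fun i : Fin n₀ => θ ⟨i.1 + 1, by have := i.isLt; omega⟩) := by
  intro θ hθ hθB hs₀ hs₁
  have hn₀pos : 0 < n₀ := by omega
  have hF_seq : ∀ E : ℕ → Ordinal, StrictMono E → (∀ k, E k ∈ B) → SpreadApartSeq G E →
      F₀ (fun i => E i) = F₁ (fun i => E (r - 1 + i)) := fun E hE hEB hEs =>
    hF _ (hE.comp Fin.val_strictMono) (fun i => hEB i) (hEs.spreadApartFin n₂)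
  obtain ⟨j₀, hj₀⟩ := Finite.exists_max fun j => max (θ j) (G (θ j))
  obtain ⟨β, hβB, hθβ, hβ⟩ := exists_spreadApart_seq_mem hB
    (fun _ => exists_mem_gt_of_mk_eq hunc.le hBcard) hG
    (max_lt (hB (hθB j₀)) (hG _ (hB (hθB j₀))))
  have hF_append : ∀ p : Fin n₀ → Ordinal, StrictMono p → (∀ i, ∃ j, p i = θ j) →
      SpreadApartFin G p → F₀ p = F₁ (fun i => appendSeq p β (r - 1 + i)) := by
    intro p hp hpθ hps
    have hpβ : ∀ i, p i < β 0 ∧ G (p i) < β 0 := fun i => by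
      obtain ⟨j, hj⟩ := hpθ i
      exact hj ▸ max_lt_iff.1 ((hj₀ j).trans_lt hθβ)
    simpa only [appendSeq_val] using hF_seq (appendSeq p β)
      (strictMono_appendSeq hp (fun j => (hβ j).1) fun i => (hpβ i).1)
      (appendSeq_mem (fun i => (hpθ i).elim fun j hj => hj ▸ hθB j) hβB)
      (spreadApartSeq_appendSeq hn₀pos hps (fun j => (hβ j).2) fun i => (hpβ i).2)
  have hmono₀ : StrictMono fun i : Fin n₀ =>
      if i.1 = 0 then θ 0 else θ ⟨i.1 + 1, by have := i.isLt; omega⟩ := fun i j hij => by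
    rw [Fin.lt_def] at hij
    dsimp only
    split_ifs <;> exact hθ (by rw [Fin.lt_def]; dsimp only [Fin.val_zero]; omega)
  refine (hF_append _ hmono₀ (fun i => by split_ifs <;> exact ⟨_, rfl⟩) hs₀).trans <| .trans ?_
    (hF_append _ (hθ.comp Fin.strictMono_succ) (fun i => ⟨_, rfl⟩) hs₁).symm
  refine congrArg F₁ (funext fun i => appendSeq_congr_of_le (m := 1) (fun j hj => ?_) (by omega))
  exact if_neg (Nat.one_le_iff_ne_zero.1 hj)
end

section
/- Let κ be a cardinal and ⟨B_m : m ∈ ω⟩ a decreasing sequence of subsets of κ (B_{m+1} ⊆ B_m). Let n ≥ 1, let C be a set, let F be a function of n+1 ordinal arguments below κ with values in C, let G* : κ → κ, let H be a function of n ordinal arguments below κ with values in C, and let r ∈ ω, such that: whenever α₁ < ... < αₙ < κ, β* ∈ B_{r+1}, and β* > G*(αₙ), then F(α₁,...,αₙ,β*) = H(α₁,...,αₙ). Suppose moreover there exist s ∈ ω, G₁ : κ → κ, and η ∈ C such that H(α₁,...,αₙ) = η for every increasing n-tuple α₁ < ... < αₙ of elements of B_s which is G₁ spread apart. Then, setting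 G(α) = max(G*(α), G₁(α)) for α < κ and m = max(r+1, s), one has F(α₁,...,α_{n+1}) = η for every increasing (n+1)-tuple α₁ < ... < α_{n+1} of elements of B_m which is G spread apart. -/
open Cardinal

namespace SpreadApartFin

variable {n : ℕ} {G : Ordinal → Ordinal}

theorem mono {G' : Ordinal → Ordinal} {θ : Fin n → Ordinal} (hG : ∀ α, G α ≤ G' α)
    (h : SpreadApartFin G' θ) : SpreadApartFin G θ :=
  List.IsChain.imp (fun _ _ hab => (hG _).trans_lt hab) h

theorem init {θ : Fin (n + 1) → Ordinal} (h : SpreadApartFin G θ) :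
    SpreadApartFin G (Fin.init θ) := by
  rw [SpreadApartFin, List.ofFn_succ', List.concat_eq_append] at h
  exact List.IsChain.left_of_append (l₂ := [_]) h

theorem lt_of_val_add_one_eq {θ : Fin n → Ordinal} (h : SpreadApartFin G θ) {i j : Fin n}
    (hij : i.val + 1 = j.val) : G (θ i) < θ j := by
  obtain ⟨i, hi⟩ := i
  obtain ⟨j, hj⟩ := j
  subst hij
  exact List.isChain_ofFn.mp h.tail i hj

end SpreadApartFin

/-- The inductive step of the partition lemma: if `F(α₁,…,αₙ,β*) = H(α₁,…,αₙ)`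
whenever `α₁ < … < αₙ < κ`, `β* ∈ B_{r+1}` and `β* > G*(αₙ)`, and `H` is
constantly `η` on increasing `G₁` spread apart `n`-tuples from `B_s`, then `F`
is constantly `η` on increasing `max(G*,G₁)` spread apart `(n+1)`-tuples from
`B_{max(r+1,s)}`. -/
theorem partition_inductive_step (κ : Cardinal.{0}) (B : ℕ → Set Ordinal)
    (hBsub : ∀ m, B m ⊆ Set.Iio κ.ord) (hBdec : ∀ m, B (m + 1) ⊆ B m)
    {C : Type*} (n : ℕ) (hn : 1 ≤ n)
    (F : (Fin (n + 1) → Ordinal) → C) (Gstar : Ordinal → Ordinal)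
    (H : (Fin n → Ordinal) → C) (r : ℕ)
    (hFH : ∀ θ : Fin n → Ordinal, StrictMono θ → (∀ i, θ i < κ.ord) →
      ∀ β : Ordinal, β ∈ B (r + 1) → Gstar (θ ⟨n - 1, by omega⟩) < β →
        F (Fin.snoc θ β) = H θ)
    (s : ℕ) (G₁ : Ordinal → Ordinal) (η : C)
    (hH : ∀ θ : Fin n → Ordinal, StrictMono θ → (∀ i, θ i ∈ B s) →
      SpreadApartFin G₁ θ → H θ = η) :
    ∀ θ : Fin (n + 1) → Ordinal, StrictMono θ → (∀ i, θ i ∈ B (max (r + 1) s)) →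
      SpreadApartFin (fun α => max (Gstar α) (G₁ α)) θ → F θ = η := by
  intro θ hθ hθB hθG
  have hB : Antitone B := antitone_nat_of_succ_le hBdec
  have hinit : StrictMono (Fin.init θ) := hθ.comp Fin.strictMono_castSucc
  have hlast : θ (Fin.last n) ∈ B (r + 1) := hB (le_max_left _ _) (hθB _)
  have hgap : Gstar (Fin.init θ ⟨n - 1, by omega⟩) < θ (Fin.last n) :=
    (le_max_left _ _).trans_lt (hθG.lt_of_val_add_one_eq (by simp; omega))
  calc F θ = F (Fin.snoc (Fin.init θ) (θ (Fin.last n))) := by rw [Fin.snoc_init_self]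
    _ = H (Fin.init θ) := hFH _ hinit (fun i => hBsub _ (hθB _)) _ hlast hgap
    _ = η := hH _ hinit (fun i => hB (le_max_right _ _) (hθB _))
      (hθG.init.mono fun _ => le_max_right _ _)
end
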